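/- Let w be a word of length n and a a letter. Suppose (h₁,p₁) and (h₂,p₂) are abelian periods of w with p₁ ≤ p₂, and suppose they have the same positive tail length, i.e., (n − h₁) mod p₁ = (n − h₂) mod p₂ = t with t > 0. If (h₁,p₁) is an abelian period of the word wa (w extended by the letter a), then (h₂,p₂) is also an abelian period of wa. -/

import Mathlib

/-- The Parikh vector of a word `v`: the number of occurrences of each letter. -/
def parikh {α : Type*} [DecidableEq α] (v : List α) : α → ℕ := fun a => v.count a

/-- The norm of a Parikh vector: the sum of its components. -/
def pnorm {α : Type*} [Fintype α] (P : α → ℕ) : ℕ := ∑ a, P a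

/-- Non-strict containment of Parikh vectors: `P ⊆ Q`. -/
def PLe {α : Type*} (P Q : α → ℕ) : Prop := ∀ a, P a ≤ Q a

/-- Strict containment of Parikh vectors: `P ⊂ Q`, i.e. componentwise `≤` and smaller norm. -/
def PLt {α : Type*} [Fintype α] (P Q : α → ℕ) : Prop :=
  (∀ a, P a ≤ Q a) ∧ pnorm P < pnorm Q

/-- The substring `w[i..j]` of `w`, from position `i` to position `j`, both included. -/
def substr {α : Type*} (w : List α) (i j : ℕ) : List α := (w.drop i).take (j + 1 - i)

/-- `(b,h,t,e)` is an occurrence of a substring of `w` with abelian period `P`: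
`w[b..e] = u₀u₁⋯u_{k-1}u_k` for some `k ≥ 2`, with `|u₀| = h`, `|u_k| = t`,
`𝒫_{u_1} = ⋯ = 𝒫_{u_{k-1}} = P`, `𝒫_{u₀} ⊂ P` and `𝒫_{u_k} ⊂ P`. -/
def IsOcc {α : Type*} [Fintype α] [DecidableEq α]
    (w : List α) (P : α → ℕ) (b h t e : ℕ) : Prop :=
  b ≤ e ∧ e < w.length ∧
  ∃ (u0 uk : List α) (us : List (List α)),
    substr w b e = u0 ++ us.flatten ++ uk ∧
    u0.length = h ∧ uk.length = t ∧
    1 ≤ us.length ∧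
    (∀ u ∈ us, parikh u = P) ∧
    PLt (parikh u0) P ∧ PLt (parikh uk) P

/-- An occurrence `(b,h,t,e)` with abelian period `P` is left-maximal if there is no
occurrence `(b-1,h',t',e)` with the same abelian period `P`. -/
def LeftMaximal {α : Type*} [Fintype α] [DecidableEq α]
    (w : List α) (P : α → ℕ) (b h t e : ℕ) : Prop :=
  IsOcc w P b h t e ∧ ∀ b' h' t', b' + 1 = b → ¬ IsOcc w P b' h' t' e

/-- An occurrence `(b,h,t,e)` with abelian period `P` is right-maximal if there is no
occurrence `(b,h',t',e+1)` with the same abelian period `P`. -/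
def RightMaximal {α : Type*} [Fintype α] [DecidableEq α]
    (w : List α) (P : α → ℕ) (b h t e : ℕ) : Prop :=
  IsOcc w P b h t e ∧ ∀ h' t', ¬ IsOcc w P b h' t' (e + 1)

/-- An abelian run of period `P` is a maximal occurrence `(b,h,t,e)` with abelian period `P`
such that `e - b - h - t + 1 ≥ 2|P|`. -/
def IsAbelianRun {α : Type*} [Fintype α] [DecidableEq α]
    (w : List α) (P : α → ℕ) (b h t e : ℕ) : Prop :=
  LeftMaximal w P b h t e ∧ RightMaximal w P b h t e ∧
  b + h + t + 2 * pnorm P ≤ e + 1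

/-- `(h,p)` is an abelian period of a word `w` (for `h ≥ 0`, `p ≥ 1`):
`w = u₀u₁⋯u_{k-1}u_k` with `k > 2`, `|u₀| = h`, `|u_i| = p` for `1 ≤ i ≤ k-1`,
all middle factors have the same Parikh vector `P`, and `𝒫_{u₀} ⊂ P`, `𝒫_{u_k} ⊂ P`. -/
def IsAbelianPeriodHP {α : Type*} [Fintype α] [DecidableEq α]
    (w : List α) (h p : ℕ) : Prop :=
  1 ≤ p ∧
  ∃ (u0 uk : List α) (us : List (List α)) (P : α → ℕ),
    w = u0 ++ us.flatten ++ uk ∧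
    u0.length = h ∧
    2 ≤ us.length ∧
    (∀ u ∈ us, u.length = p ∧ parikh u = P) ∧
    PLt (parikh u0) P ∧ PLt (parikh uk) P

/-! The two tails are the same word `s`, the last `t` letters of `w`. The last full block of
the `p₁`-factorization of `w` is a suffix of the last full block of the `p₂`-factorization, so
the Parikh vector `Q₁` of the former is contained in the vector `P` of the latter. The
`(h₁, p₁)`-factorization of `wa` starts with the same first block as that of `w`, so it also has
Parikh vector `Q₁`, and `sa` is either its tail or its last block; hence `𝒫_{sa} ⊆ Q₁ ⊆ P`.
So `sa` is a valid new tail of the `(h₂, p₂)`-factorization, or a new full block if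
`|sa| = p₂`. -/

section Development

variable {α : Type*}

section Parikh

variable [DecidableEq α]

lemma parikh_append (u v : List α) : parikh (u ++ v) = parikh u + parikh v := by
  funext b
  simp [parikh]

lemma parikh_nil : parikh ([] : List α) = 0 := by
  funext b
  simp [parikh]

lemma parikh_flatten {L : List (List α)} {P : α → ℕ} (h : ∀ u ∈ L, parikh u = P) :
    parikh L.flatten = L.length • P := by
  funext b
  simp only [parikh, List.count_flatten, Pi.smul_apply]
  rw [List.map_congr_left (f := List.count b) (g := fun _ => P b) fun u hu => congrFun (h u hu) b,
    List.map_const', List.sum_replicate]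

lemma parikh_drop_le_parikh_drop (x : List α) {i j : ℕ} (hij : i ≤ j) :
    parikh (x.drop j) ≤ parikh (x.drop i) :=
  fun b => (List.drop_sublist_drop_left x hij).count_le b

lemma pnorm_parikh [Fintype α] (v : List α) : pnorm (parikh v) = v.length := by
  simpa [pnorm, parikh] using
    Multiset.sum_count_eq_card (s := Finset.univ) (m := (v : Multiset α)) (by simp)

end Parikh

lemma eq_of_le_of_pnorm_le [Fintype α] {P Q : α → ℕ} (hle : P ≤ Q) (hn : pnorm Q ≤ pnorm P) :
    P = Q := by
  have hsum : pnorm P = pnorm Q := le_antisymm (Finset.sum_le_sum fun b _ => hle b) hn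
  funext b
  exact (Finset.sum_eq_sum_iff_of_le fun b _ => hle b).1 hsum b (Finset.mem_univ b)

lemma length_flatten_of_forall_length_eq {L : List (List α)} {p : ℕ}
    (h : ∀ u ∈ L, u.length = p) : L.flatten.length = L.length * p := by
  rw [List.length_flatten, List.map_congr_left h, List.map_const', List.sum_replicate, smul_eq_mul]

structure IsAbelianFactorization [Fintype α] [DecidableEq α] (x : List α) (p : ℕ) (P : α → ℕ)
    (u0 : List α) (us : List (List α)) (uk : List α) : Prop where
  eq : x = u0 ++ us.flatten ++ uk
  two_le_length : 2 ≤ us.length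
  block : ∀ u ∈ us, u.length = p ∧ parikh u = P
  head_lt : PLt (parikh u0) P
  tail_lt : PLt (parikh uk) P

section Factorization

variable [Fintype α] [DecidableEq α] {x : List α} {h p : ℕ} {P : α → ℕ}

lemma IsAbelianPeriodHP.exists_factorization (hx : IsAbelianPeriodHP x h p) :
    ∃ u0 us uk P, IsAbelianFactorization x p P u0 us uk ∧ u0.length = h := by
  obtain ⟨-, u0, uk, us, P, heq, hh, hk, hblock, h0, hlast⟩ := hx
  exact ⟨u0, us, uk, P, ⟨heq, hk, hblock, h0, hlast⟩, hh⟩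

namespace IsAbelianFactorization

variable {u0 uk : List α} {us : List (List α)} (F : IsAbelianFactorization x p P u0 us uk)
include F

lemma pnorm_eq : pnorm P = p := by
  obtain ⟨u, hu⟩ := List.exists_mem_of_length_pos (l := us) (by have := F.two_le_length; omega)
  rw [← (F.block u hu).2, pnorm_parikh, (F.block u hu).1]

lemma length_tail_lt : uk.length < p := by
  simpa only [pnorm_parikh, F.pnorm_eq] using F.tail_lt.2

lemma length_eq : x.length = u0.length + us.length * p + uk.length := by
  rw [F.eq, List.length_append, List.length_append,
    length_flatten_of_forall_length_eq fun u hu => (F.block u hu).1]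

lemma length_tail_eq_mod : uk.length = (x.length - u0.length) % p := by
  rw [F.length_eq, Nat.add_assoc, Nat.add_sub_cancel_left, Nat.mul_add_mod_self_right,
    Nat.mod_eq_of_lt F.length_tail_lt]

lemma drop_length_sub_length_tail : x.drop (x.length - uk.length) = uk := by
  have hlen : x.length - uk.length = (u0 ++ us.flatten).length := by
    rw [F.eq, List.length_append, Nat.add_sub_cancel]
  rw [hlen, F.eq, List.drop_left]

lemma isAbelianPeriodHP : IsAbelianPeriodHP x u0.length p :=
  ⟨by have := F.length_tail_lt; omega, u0, uk, us, P, F.eq, rfl, F.two_le_length, F.block,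
    F.head_lt, F.tail_lt⟩

lemma parikh_drop {j : ℕ} (hj : j ≤ us.length) :
    parikh (x.drop (x.length - (uk.length + j * p))) = j • P + parikh uk := by
  set k := us.length - j
  have hblocks : ∀ u ∈ us.drop k, u.length = p ∧ parikh u = P :=
    fun u hu => F.block u (List.mem_of_mem_drop hu)
  have hsplit : x = (u0 ++ (us.take k).flatten) ++ ((us.drop k).flatten ++ uk) := by
    rw [F.eq, ← List.take_append_drop k us, List.flatten_append, List.take_append_drop]
    simp only [List.append_assoc]
  have hlen : ((us.drop k).flatten ++ uk).length = uk.length + j * p := by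
    rw [List.length_append, length_flatten_of_forall_length_eq fun u hu => (hblocks u hu).1,
      List.length_drop, show us.length - k = j by omega, Nat.add_comm]
  have hdrop : x.length - (uk.length + j * p) = (u0 ++ (us.take k).flatten).length := by
    rw [← hlen, hsplit, List.length_append, Nat.add_sub_cancel]
  rw [hdrop, hsplit, List.drop_left, parikh_append, parikh_flatten fun u hu => (hblocks u hu).2,
    List.length_drop, show us.length - k = j by omega]

lemma parikh_take_drop_length_head : parikh ((x.drop u0.length).take p) = P := by
  obtain _ | ⟨u, us'⟩ := us
  · simpa using F.two_le_length
  have hu := F.block u List.mem_cons_self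
  rw [F.eq, List.append_assoc, List.drop_left, List.flatten_cons, List.append_assoc,
    ← hu.1, List.take_left, hu.2]

lemma parikh_drop_le {m : ℕ} (hm : m ≤ p) (hmod : m % p = uk.length) :
    parikh (x.drop (x.length - m)) ≤ P := by
  rcases hm.lt_or_eq with hlt | rfl
  · rw [Nat.mod_eq_of_lt hlt] at hmod
    rw [hmod, F.drop_length_sub_length_tail]
    exact F.tail_lt.1
  · rw [Nat.mod_self, eq_comm, List.length_eq_zero_iff] at hmod
    have hlast := F.parikh_drop (j := 1) (by have := F.two_le_length; omega)
    rw [hmod, List.length_nil, zero_add, one_mul, one_smul, parikh_nil, add_zero] at hlast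
    exact hlast.le

lemma append_singleton {a : α} (ha : parikh (uk ++ [a]) ≤ P) :
    IsAbelianPeriodHP (x ++ [a]) u0.length p := by
  have hp := F.pnorm_eq
  have hlen : (uk ++ [a]).length ≤ p := by
    simpa only [List.length_append, List.length_singleton] using
      Nat.succ_le_of_lt F.length_tail_lt
  rcases hlen.lt_or_eq with hlt | heq
  · refine IsAbelianFactorization.isAbelianPeriodHP (us := us) (uk := uk ++ [a])
      ⟨by rw [F.eq, List.append_assoc], F.two_le_length, F.block, F.head_lt, ha, ?_⟩
    rwa [pnorm_parikh, hp]
  · have hfull : parikh (uk ++ [a]) = P := eq_of_le_of_pnorm_le ha (by rw [pnorm_parikh, hp, heq])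
    refine IsAbelianFactorization.isAbelianPeriodHP (us := us ++ [uk ++ [a]]) (uk := [])
      ⟨by rw [F.eq]; simp, ?_, ?_, F.head_lt, ⟨?_, ?_⟩⟩
    · simpa using F.two_le_length.trans (Nat.le_succ _)
    · simpa [or_imp, forall_and, heq, hfull] using F.block
    · simp [parikh_nil]
    · rw [pnorm_parikh, hp, ← heq]
      simp

lemma le_of_length_tail_eq {p' : ℕ} {P' : α → ℕ} {v0 vk : List α} {vs : List (List α)}
    (F' : IsAbelianFactorization x p' P' v0 vs vk) (hp : p ≤ p') (ht : uk.length = vk.length) :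
    P ≤ P' := by
  have hlast := F.parikh_drop (j := 1) (by have := F.two_le_length; omega)
  have hlast' := F'.parikh_drop (j := 1) (by have := F'.two_le_length; omega)
  have htail : parikh uk = parikh vk := by
    rw [← F.drop_length_sub_length_tail, ← F'.drop_length_sub_length_tail, ht]
  have hsub := parikh_drop_le_parikh_drop x
    (show x.length - (vk.length + 1 * p') ≤ x.length - (uk.length + 1 * p) by omega)
  rw [hlast, hlast', htail, one_smul, one_smul] at hsub
  exact le_of_add_le_add_right hsub

end IsAbelianFactorization

end Factorization

end Development

theorem abelianPeriod_extend_general {α : Type*} [Fintype α] [DecidableEq α]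
    (w : List α) (a : α) (h₁ p₁ h₂ p₂ t : ℕ)
    (hp : p₁ ≤ p₂)
    (hper₁ : IsAbelianPeriodHP w h₁ p₁) (hper₂ : IsAbelianPeriodHP w h₂ p₂)
    (ht₁ : (w.length - h₁) % p₁ = t) (ht₂ : (w.length - h₂) % p₂ = t)
    (hext : IsAbelianPeriodHP (w ++ [a]) h₁ p₁) :
    IsAbelianPeriodHP (w ++ [a]) h₂ p₂ := by
  obtain ⟨u0, us, uk, P, F₂, rfl⟩ := hper₂.exists_factorization
  obtain ⟨w0, ws, wk, Q₁, F₁, rfl⟩ := hper₁.exists_factorization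
  obtain ⟨v0, vs, vk, Q, F, hv0⟩ := hext.exists_factorization
  have huk : uk.length = t := F₂.length_tail_eq_mod.trans ht₂
  have hwk : wk.length = t := F₁.length_tail_eq_mod.trans ht₁
  have htp : t < p₁ := hwk ▸ F₁.length_tail_lt
  have hfirst : w0.length + p₁ ≤ w.length := by
    have := F₁.length_eq
    have := F₁.two_le_length
    nlinarith
  have hQ : Q = Q₁ := by
    rw [← F.parikh_take_drop_length_head, ← F₁.parikh_take_drop_length_head, hv0,
      List.drop_append_of_le_length (by omega),
      List.take_append_of_le_length (by rw [List.length_drop]; omega)]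
  have hvk : (t + 1) % p₁ = vk.length := by
    rw [F.length_tail_eq_mod, hv0, ← ht₁, Nat.mod_add_mod, List.length_append,
      List.length_singleton]
    congr 1
    omega
  have htail : parikh (uk ++ [a]) ≤ Q₁ := by
    have hle := F.parikh_drop_le (m := t + 1) htp hvk
    rwa [hQ, List.length_append, List.length_singleton, Nat.add_sub_add_right, ← huk,
      List.drop_append_of_le_length (by omega), F₂.drop_length_sub_length_tail] at hle
  exact F₂.append_singleton (htail.trans (F₁.le_of_length_tail_eq F₂ hp (hwk.trans huk.symm)))

/-- If two abelian periods of `w` with `p₁ ≤ p₂` have the same positive tail length and the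
smaller one extends to `wa`, then so does the larger one. -/
theorem abelianPeriod_extend {α : Type*} [Fintype α] [DecidableEq α]
    (w : List α) (a : α) (h₁ p₁ h₂ p₂ t : ℕ)
    (hp : p₁ ≤ p₂)
    (hper₁ : IsAbelianPeriodHP w h₁ p₁) (hper₂ : IsAbelianPeriodHP w h₂ p₂)
    (ht₁ : (w.length - h₁) % p₁ = t) (ht₂ : (w.length - h₂) % p₂ = t) (htpos : 0 < t)
    (hext : IsAbelianPeriodHP (w ++ [a]) h₁ p₁) :
    IsAbelianPeriodHP (w ++ [a]) h₂ p₂ :=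
  abelianPeriod_extend_general w a h₁ p₁ h₂ p₂ t hp hper₁ hper₂ ht₁ ht₂ hext
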